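/- arXiv:1601.06060 — 8 statements merged into one kernel-verified Lean document; each statement's English description precedes it below -/
import Mathlib

section
/- Streaming model as in context. For every allocation r : V → Fin c, the shares x(v) := 1 / n(r v) satisfy x(v) > 0 for all v, ∑_{v ∈ V} x(v) ≤ c, and w(v) / x(v) = w(v) · n(r v) for every v ∈ V. Consequently, for every list P of vertices, ∑_{v ∈ P} w(v) / x(v) ≤ ∑_{v ∈ P} w(v) · n(r v) + (sum of transfer costs of the edges of P under r); that is, the continuous streaming cost under these shares is at most the discrete streaming cost under r on every path. -/
/-- Continuous cost lower-bounds discrete cost (`δ(G) ≤ d(G)`): for any allocation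
`r : V → Fin c`, the shares `x v := 1 / n(r v)` are positive, sum to at most `c`, satisfy
`w v / x v = w v · n(r v)`, and on every path `P` (a list of vertices) the continuous
streaming cost `∑_{v ∈ P} w v / x v` is at most the discrete streaming cost of `P`
under `r` (processing costs plus transfer costs of the consecutive edges of `P`). -/
theorem continuous_le_discrete (V : Type*) [Fintype V]
    (w : V → ℝ) (hw : ∀ v, 0 < w v)
    (b : V → V → ℝ) (hb : ∀ u v, 0 ≤ b u v)
    (c : ℕ) (hc : 1 ≤ c) (r : V → Fin c)
    (x : V → ℝ)
    (hx : ∀ v, x v = 1 / ((Finset.univ.filter fun u => r u = r v).card : ℝ)) :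
    (∀ v, 0 < x v) ∧ (∑ v : V, x v ≤ c) ∧
      (∀ v, w v / x v = w v * ((Finset.univ.filter fun u => r u = r v).card : ℝ)) ∧
      (∀ P : List V,
        (P.map fun v => w v / x v).sum ≤
          (P.map fun v =>
              w v * ((Finset.univ.filter fun u => r u = r v).card : ℝ)).sum
            + ((P.zip P.tail).map fun p =>
                if r p.1 ≠ r p.2 then b p.1 p.2 else 0).sum) := by
  have hcard : ∀ v : V, 0 < ((Finset.univ.filter fun u => r u = r v).card : ℝ) := by
    intro v
    have : v ∈ Finset.univ.filter fun u => r u = r v := by simp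
    have h := Finset.card_pos.mpr ⟨v, this⟩
    exact_mod_cast h
  have hxpos : ∀ v, 0 < x v := by
    intro v; rw [hx v]; exact one_div_pos.mpr (hcard v)
  have hdiv : ∀ v, w v / x v =
      w v * ((Finset.univ.filter fun u => r u = r v).card : ℝ) := by
    intro v
    rw [hx v]
    field_simp
  refine ⟨hxpos, ?_, hdiv, ?_⟩
  · -- sum bound
    have key : ∑ v : V, x v =
        ∑ R : Fin c, ∑ v ∈ Finset.univ.filter fun v => r v = R, x v := by
      rw [← Finset.sum_fiberwise Finset.univ r x]
    rw [key]
    have hle : ∀ R : Fin c,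
        (∑ v ∈ Finset.univ.filter fun v => r v = R, x v) ≤ 1 := by
      intro R
      by_cases hR : (Finset.univ.filter fun v => r v = R).Nonempty
      · have : ∀ v ∈ Finset.univ.filter fun v => r v = R,
            x v = 1 / ((Finset.univ.filter fun v => r v = R).card : ℝ) := by
          intro v hv
          rw [hx v]
          simp only [Finset.mem_filter] at hv
          rw [hv.2]
        rw [Finset.sum_congr rfl this, Finset.sum_const, nsmul_eq_mul]
        have hpos : 0 < ((Finset.univ.filter fun v => r v = R).card : ℝ) := by
          exact_mod_cast Finset.card_pos.mpr hR
        rw [mul_one_div, div_self (ne_of_gt hpos)]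
      · rw [Finset.not_nonempty_iff_eq_empty] at hR
        rw [hR]; simp
    calc (∑ R : Fin c, ∑ v ∈ Finset.univ.filter fun v => r v = R, x v)
        ≤ ∑ _R : Fin c, (1 : ℝ) := Finset.sum_le_sum fun R _ => hle R
      _ = c := by simp
  · intro P
    have h1 : (P.map fun v => w v / x v).sum =
        (P.map fun v =>
          w v * ((Finset.univ.filter fun u => r u = r v).card : ℝ)).sum := by
      congr 1
      exact List.map_congr_left fun v _ => hdiv v
    rw [h1]
    have h2 : 0 ≤ ((P.zip P.tail).map fun p =>
        if r p.1 ≠ r p.2 then b p.1 p.2 else 0).sum := by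
      apply List.sum_nonneg
      intro a ha
      simp only [List.mem_map] at ha
      obtain ⟨p, _, rfl⟩ := ha
      split
      · exact hb p.1 p.2
      · exact le_rfl
    linarith
end

section
/- Let P be a finite set of D ≥ 1 tasks with weights w : P → ℝ satisfying w(v) ≥ w_min > 0, and let r : P → Fin c with c ≥ 1. Then ∑_{v ∈ P} w(v) · |{u ∈ P : r u = r v}| ≥ w_min · max(D, D²/c). Consequently, if additionally each of the at most D−1 edges along P has transfer weight at most k · w_min · ⌈D/c⌉ for some constant k > 0, then the total transfer cost along P (at most (D−1)·k·w_min·⌈D/c⌉) is at most 2k times the processing cost ∑_{v ∈ P} w(v) · |{u ∈ P : r u = r v}|. -/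
/-- Computationally constrained paths: for a path `P` of `D ≥ 1` tasks (indexed by
`Fin D`, with edges between consecutive tasks) with weights `w v ≥ w_min > 0`, mapped to
`c ≥ 1` resources by `r`, the processing cost `∑ v, w v · |{u : r u = r v}|` is at least
`w_min · max(D, D²/c)`; and if every edge weight is at most `k·w_min·⌈D/c⌉` (`k > 0`),
then the total transfer cost along `P` is at most `2k` times the processing cost. -/
theorem path_computationally_constrained (D c : ℕ) (hD : 1 ≤ D) (hc : 1 ≤ c)
    (w : Fin D → ℝ) (wmin : ℝ) (hwmin : 0 < wmin) (hw : ∀ v, wmin ≤ w v)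
    (r : Fin D → Fin c) (k : ℝ) (hk : 0 < k)
    (be : Fin (D - 1) → ℝ) (hbe0 : ∀ e, 0 ≤ be e)
    (hbe : ∀ e, be e ≤ k * wmin * (Nat.ceil ((D : ℝ) / (c : ℝ)) : ℝ)) :
    wmin * max (D : ℝ) ((D : ℝ) ^ 2 / c) ≤
        (∑ v, w v * ((Finset.univ.filter fun u => r u = r v).card : ℝ)) ∧
      (∑ e : Fin (D - 1),
          if r ⟨e.1, by have := e.2; omega⟩ ≠ r ⟨e.1 + 1, by have := e.2; omega⟩
          then be e else 0) ≤
        2 * k * ∑ v, w v * ((Finset.univ.filter fun u => r u = r v).card : ℝ) := by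
  classical
  set N : Fin D → ℝ := fun v => ((Finset.univ.filter fun u => r u = r v).card : ℝ) with hNdef
  have hN1 : ∀ v, (1:ℝ) ≤ N v := by
    intro v
    have hv : v ∈ Finset.univ.filter fun u => r u = r v := by simp
    have h := Finset.card_pos.mpr ⟨v, hv⟩
    simp only [hNdef]
    exact_mod_cast h
  have hcpos : (0:ℝ) < c := by exact_mod_cast hc
  -- sum of N ≥ D
  have hsum_ge_D : (D:ℝ) ≤ ∑ v, N v := by
    calc (D:ℝ) = ∑ _v : Fin D, (1:ℝ) := by simp
    _ ≤ ∑ v, N v := Finset.sum_le_sum fun v _ => hN1 v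
  -- fiberwise: sum of N = sum over fibers of card²
  have hfib : ∑ v, N v
      = ∑ i : Fin c, ((Finset.univ.filter fun u => r u = i).card : ℝ)^2 := by
    rw [← Finset.sum_fiberwise Finset.univ r N]
    refine Finset.sum_congr rfl fun i _ => ?_
    have hcongr : ∀ v ∈ Finset.univ.filter (fun u => r u = i),
        N v = ((Finset.univ.filter fun u => r u = i).card : ℝ) := by
      intro v hv
      simp only [Finset.mem_filter] at hv
      simp only [hNdef, hv.2]
    rw [Finset.sum_congr rfl hcongr, Finset.sum_const, nsmul_eq_mul, sq]
  -- ∑ fibers card = D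
  have hfibsum : ∑ i : Fin c, ((Finset.univ.filter fun u => r u = i).card : ℝ) = D := by
    rw [← Nat.cast_sum]
    norm_cast
    rw [← Finset.card_eq_sum_card_fiberwise (fun v _ => Finset.mem_univ (r v))]
    simp
  -- Cauchy–Schwarz: D² ≤ c * ∑ card²
  have hCS : (D:ℝ)^2 ≤ (c:ℝ) * ∑ v, N v := by
    rw [hfib, ← hfibsum]
    have := sq_sum_le_card_mul_sum_sq
      (s := (Finset.univ : Finset (Fin c)))
      (f := fun i => ((Finset.univ.filter fun u => r u = i).card : ℝ))
    simpa using this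
  have hsum_ge_D2c : (D:ℝ)^2 / c ≤ ∑ v, N v := by
    rw [div_le_iff₀ hcpos]
    linarith [hCS]
  have hmax : max (D:ℝ) ((D:ℝ)^2 / c) ≤ ∑ v, N v := max_le hsum_ge_D hsum_ge_D2c
  -- processing cost lower bound
  have hS : wmin * ∑ v, N v ≤ ∑ v, w v * N v := by
    rw [Finset.mul_sum]
    refine Finset.sum_le_sum fun v _ => ?_
    exact mul_le_mul_of_nonneg_right (hw v) (by linarith [hN1 v])
  have hpart1 : wmin * max (D:ℝ) ((D:ℝ)^2 / c) ≤ ∑ v, w v * N v := by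
    calc wmin * max (D:ℝ) ((D:ℝ)^2 / c) ≤ wmin * ∑ v, N v :=
          mul_le_mul_of_nonneg_left hmax hwmin.le
    _ ≤ _ := hS
  refine ⟨hpart1, ?_⟩
  -- transfer cost bound
  set B : ℝ := k * wmin * (Nat.ceil ((D : ℝ) / (c : ℝ)) : ℝ) with hBdef
  have hB0 : 0 ≤ B := by
    have : (0:ℝ) ≤ (Nat.ceil ((D : ℝ) / (c : ℝ)) : ℝ) := Nat.cast_nonneg _
    positivity
  have hT : (∑ e : Fin (D - 1),
      if r ⟨e.1, by have := e.2; omega⟩ ≠ r ⟨e.1 + 1, by have := e.2; omega⟩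
      then be e else 0) ≤ ((D:ℝ) - 1) * B := by
    have h1 : (∑ e : Fin (D - 1),
        if r ⟨e.1, by have := e.2; omega⟩ ≠ r ⟨e.1 + 1, by have := e.2; omega⟩
        then be e else 0) ≤ ∑ _e : Fin (D - 1), B := by
      refine Finset.sum_le_sum fun e _ => ?_
      split
      · exact hbe e
      · exact hB0
    have h2 : (∑ _e : Fin (D - 1), B) = ((D - 1 : ℕ):ℝ) * B := by
      simp [Finset.sum_const, nsmul_eq_mul]
    have h3 : ((D - 1 : ℕ):ℝ) = (D:ℝ) - 1 := by
      have : (1:ℕ) ≤ D := hD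
      push_cast [Nat.cast_sub this]
      ring
    rw [h2, h3] at h1
    exact h1
  -- arithmetic: (D-1) * B ≤ 2k * wmin * max(D, D²/c)
  have hceil : (Nat.ceil ((D : ℝ) / (c : ℝ)) : ℝ) < (D:ℝ)/c + 1 :=
    Nat.ceil_lt_add_one (by positivity)
  have hkey : ((D:ℝ) - 1) * B ≤ 2 * k * (wmin * max (D:ℝ) ((D:ℝ)^2 / c)) := by
    have hD1 : (1:ℝ) ≤ (D:ℝ) := by exact_mod_cast hD
    have hx0 : (0:ℝ) ≤ (D:ℝ)/c := by positivity
    have hmax1 : (D:ℝ) ≤ max (D:ℝ) ((D:ℝ)^2 / c) := le_max_left _ _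
    have hmax2 : (D:ℝ)^2 / c ≤ max (D:ℝ) ((D:ℝ)^2 / c) := le_max_right _ _
    have hDx : (D:ℝ) * ((D:ℝ)/c) = (D:ℝ)^2/c := by ring
    have step1 : ((D:ℝ) - 1) * B ≤ ((D:ℝ) - 1) * (k * wmin * ((D:ℝ)/c + 1)) := by
      apply mul_le_mul_of_nonneg_left _ (by linarith)
      apply mul_le_mul_of_nonneg_left hceil.le (by positivity)
    have step2 : ((D:ℝ) - 1) * (k * wmin * ((D:ℝ)/c + 1))
        ≤ 2 * k * (wmin * max (D:ℝ) ((D:ℝ)^2 / c)) := by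
      have h1 := mul_le_mul_of_nonneg_left hmax1 (mul_pos hk hwmin).le
      have h2 := mul_le_mul_of_nonneg_left hmax2 (mul_pos hk hwmin).le
      have h3 : 0 ≤ k * wmin * ((D:ℝ)/c + 1) := by positivity
      have expand : ((D:ℝ) - 1) * (k * wmin * ((D:ℝ)/c + 1))
          = k * wmin * ((D:ℝ)^2/c) + k * wmin * (D:ℝ) - k * wmin * ((D:ℝ)/c + 1) := by
        field_simp
      linarith
    linarith
  calc (∑ e : Fin (D - 1),
      if r ⟨e.1, by have := e.2; omega⟩ ≠ r ⟨e.1 + 1, by have := e.2; omega⟩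
      then be e else 0) ≤ ((D:ℝ) - 1) * B := hT
  _ ≤ 2 * k * (wmin * max (D:ℝ) ((D:ℝ)^2 / c)) := hkey
  _ ≤ 2 * k * ∑ v, w v * N v :=
      mul_le_mul_of_nonneg_left hpart1 (by positivity)
end

section
/- Let n = 3m with m ≥ 2, let V = Fin n with no edges, c = 2 resources, and weights w(0) = n/3 and w(i) = 1 for i ≠ 0; the streaming cost of an allocation r : Fin n → Fin 2 is max_v w(v)·n(r v) since there are no edges. (a) Every allocation r whose resource weight sums are balanced, i.e., |∑_{v : r v = 0} w(v) − ∑_{v : r v = 1} w(v)| ≤ 1, has streaming cost at least n²/9 − n/3. (b) The allocation r* with r*(0) = 0 and r*(i) = 1 for all i ≠ 0 has streaming cost max(n/3, n−1) = n − 1. -/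
/-- The load-balancing strategy fails: on the edgeless graph of `n = 3m` (`m ≥ 2`) parallel
tasks with `w 0 = n/3` and `w i = 1` otherwise, allocated to `c = 2` resources,
(a) every allocation whose per-resource weight sums are balanced (differ by at most 1)
has streaming cost `max_v w v · n(r v)` at least `n²/9 − n/3`, while
(b) the allocation `r*` dedicating resource 0 to task 0 has streaming cost
`max(n/3, n−1) = n − 1`. -/
theorem load_balancing_fails (m n : ℕ) (hm : 2 ≤ m) (hn : n = 3 * m)
    (w : Fin n → ℝ) (hw : ∀ v, w v = if v.val = 0 then (n : ℝ) / 3 else 1)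
    (rstar : Fin n → Fin 2) (hrstar : ∀ v, rstar v = if v.val = 0 then 0 else 1) :
    (∀ r : Fin n → Fin 2,
        |(∑ v ∈ Finset.univ.filter fun v => r v = 0, w v)
            - ∑ v ∈ Finset.univ.filter fun v => r v = 1, w v| ≤ 1 →
        (n : ℝ) ^ 2 / 9 - (n : ℝ) / 3 ≤
          Finset.univ.sup' ⟨⟨0, by omega⟩, Finset.mem_univ _⟩
            (fun v => w v * ((Finset.univ.filter fun u => r u = r v).card : ℝ))) ∧
      Finset.univ.sup' ⟨⟨0, by omega⟩, Finset.mem_univ _⟩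
          (fun v => w v * ((Finset.univ.filter fun u => rstar u = rstar v).card : ℝ))
        = max ((n : ℝ) / 3) ((n : ℝ) - 1) ∧
      max ((n : ℝ) / 3) ((n : ℝ) - 1) = (n : ℝ) - 1 := by
  have hn6 : 6 ≤ n := by omega
  have hnR : (6 : ℝ) ≤ (n : ℝ) := by exact_mod_cast hn6
  set z : Fin n := ⟨0, by omega⟩ with hzdef
  have hzval : z.val = 0 := rfl
  -- card partition lemma
  have hcard : ∀ r : Fin n → Fin 2,
      (Finset.univ.filter fun v => r v = 0).card
        + (Finset.univ.filter fun v => r v = 1).card = n := by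
    intro r
    have h2 : ∀ a : Fin 2, ¬(a = 0) ↔ a = 1 := by decide
    have heq : (Finset.univ.filter fun v => r v = 1)
        = (Finset.univ.filter fun v => ¬(r v = 0)) :=
      Finset.filter_congr (fun v _ => by simp [h2])
    rw [heq]
    simpa using Finset.card_filter_add_card_filter_not
      (s := (Finset.univ : Finset (Fin n))) (p := fun v => r v = 0)
  -- sum lemma
  have hsum : ∀ (r : Fin n → Fin 2) (i : Fin 2),
      (∑ v ∈ Finset.univ.filter fun v => r v = i, w v)
        = ((Finset.univ.filter fun v => r v = i).card : ℝ)
          + (if r z = i then (n : ℝ) / 3 - 1 else 0) := by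
    intro r i
    have step : ∀ v : Fin n, w v = 1 + (if v = z then (n : ℝ) / 3 - 1 else 0) := by
      intro v
      rw [hw]
      by_cases h : v = z
      · subst h; simp [hzval]
      · have hv : v.val ≠ 0 := fun hv => h (Fin.ext (by simp [hv, hzval]))
        simp [h, hv]
    rw [Finset.sum_congr rfl (fun v _ => step v), Finset.sum_add_distrib,
      Finset.sum_const, Finset.sum_ite_eq' _ z (fun _ => (n : ℝ) / 3 - 1)]
    by_cases h : r z = i <;> simp [h, Finset.mem_filter]
  refine ⟨?_, ?_, ?_⟩
  · -- part (a)
    intro r hbal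
    set k0 : ℕ := (Finset.univ.filter fun v => r v = 0).card with hk0
    set k1 : ℕ := (Finset.univ.filter fun v => r v = 1).card with hk1
    have hkn : k0 + k1 = n := hcard r
    have hknR : (k0 : ℝ) + (k1 : ℝ) = n := by exact_mod_cast hkn
    have habs := abs_le.mp hbal
    rw [hsum r 0, hsum r 1] at habs
    have h01 : r z = 0 ∨ r z = 1 := by
      have : ∀ a : Fin 2, a = 0 ∨ a = 1 := by decide
      exact this (r z)
    rcases h01 with hz0 | hz1
    · have hk : (n : ℝ) / 3 ≤ (k0 : ℝ) := by
        simp only [hz0] at habs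
        simp at habs
        linarith [habs.1, habs.2]
      have hle := Finset.le_sup'
        (f := fun v => w v * ((Finset.univ.filter fun u => r u = r v).card : ℝ))
        (Finset.mem_univ z)
      simp only [hz0] at hle
      have hwz : w z = (n : ℝ) / 3 := by rw [hw]; simp [hzval]
      rw [hwz] at hle
      refine le_trans ?_ hle
      nlinarith [hk, hnR]
    · have hk : (n : ℝ) / 3 ≤ (k1 : ℝ) := by
        simp only [hz1] at habs
        simp at habs
        linarith [habs.1, habs.2]
      have hle := Finset.le_sup'
        (f := fun v => w v * ((Finset.univ.filter fun u => r u = r v).card : ℝ))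
        (Finset.mem_univ z)
      simp only [hz1] at hle
      have hwz : w z = (n : ℝ) / 3 := by rw [hw]; simp [hzval]
      rw [hwz] at hle
      refine le_trans ?_ hle
      nlinarith [hk, hnR]
  · -- part (b)
    have hrz : rstar z = 0 := by rw [hrstar]; simp [hzval]
    have hfz : (Finset.univ.filter fun u => rstar u = rstar z) = {z} := by
      ext u
      simp only [Finset.mem_filter, Finset.mem_univ, true_and, hrz,
        Finset.mem_singleton, hrstar u]
      by_cases h : u.val = 0
      · simp [h, Fin.ext_iff, hzval]
      · simp [h, Fin.ext_iff, hzval]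
    have hcard1 : ∀ v : Fin n, v.val ≠ 0 →
        (Finset.univ.filter fun u => rstar u = rstar v).card = n - 1 := by
      intro v hv
      have hrv : rstar v = 1 := by rw [hrstar]; simp [hv]
      have h0 : (Finset.univ.filter fun u => rstar u = 0).card = 1 := by
        have := hfz
        rw [hrz] at this
        rw [this]; simp
      have htot := hcard rstar
      simp only [hrv]
      omega
    have hcast : ((n - 1 : ℕ) : ℝ) = (n : ℝ) - 1 := by
      have : 1 ≤ n := by omega
      push_cast [this]; ring
    have key : Finset.univ.sup' ⟨⟨0, by omega⟩, Finset.mem_univ _⟩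
        (fun v => w v * ((Finset.univ.filter fun u => rstar u = rstar v).card : ℝ))
        = (n : ℝ) - 1 := by
      apply le_antisymm
      · apply Finset.sup'_le
        intro v _
        by_cases h : v.val = 0
        · have hvz : v = z := Fin.ext (by simp [h, hzval])
          subst hvz
          rw [hfz, hw]
          simp [hzval]
          linarith
        · rw [hcard1 v h, hw, hcast]
          simp [h]
      · obtain ⟨v1, hv1⟩ : ∃ v : Fin n, v.val = 1 := ⟨⟨1, by omega⟩, rfl⟩
        have h1 : v1.val ≠ 0 := by omega
        have hle := Finset.le_sup'
          (f := fun v => w v * ((Finset.univ.filter fun u => rstar u = rstar v).card : ℝ))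
          (Finset.mem_univ v1)
        rw [hcard1 _ h1, hw, hcast] at hle
        simpa [h1] using hle
    rw [key, max_eq_right (by linarith)]
  · exact max_eq_right (by linarith)
end

section
/- Let c ≥ 2, n ≥ 1 be natural numbers and let a : Fin (c+1) → ℝ satisfy 1 ≥ a 0, a i ≥ a (i+1) > 0 for all i < c. If at least c/2 of the indices i ∈ {0,…,c−1} satisfy a (i+1) < a i / n^{2/c}, then a c < 1/n. -/
set_option maxHeartbeats 1000000


open scoped Classical in
/-- Telescoping pigeonhole lemma for the discrete algorithm: given `c ≥ 2`, `n ≥ 1`, and a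
nonincreasing sequence of positive reals `a 0 ≥ a 1 ≥ … ≥ a c` with `a 0 ≤ 1`, if at least
`c/2` of the indices `i < c` satisfy `a (i+1) < a i / n^(2/c)`, then `a c < 1/n`. -/
theorem shares_drop_below_inv_n (c n : ℕ) (hc : 2 ≤ c) (hn : 1 ≤ n)
    (a : Fin (c + 1) → ℝ) (ha0 : a 0 ≤ 1)
    (hpos : ∀ i : Fin c, 0 < a i.succ)
    (hmono : ∀ i : Fin c, a i.succ ≤ a i.castSucc)
    (hdrop : (c : ℝ) / 2 ≤
        ((Finset.univ.filter fun i : Fin c =>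
            a i.succ < a i.castSucc / (n : ℝ) ^ ((2 : ℝ) / (c : ℝ))).card : ℝ)) :
    a (Fin.last c) < 1 / n := by
  set r : ℝ := (n : ℝ) ^ ((2 : ℝ) / (c : ℝ)) with hr
  have hn1 : (1 : ℝ) ≤ (n : ℝ) := by exact_mod_cast hn
  have hc0 : (0 : ℝ) < (c : ℝ) := by positivity
  have hr1 : (1 : ℝ) ≤ r := Real.one_le_rpow hn1 (by positivity)
  have hr0 : (0 : ℝ) < r := lt_of_lt_of_le one_pos hr1
  set S : Finset (Fin c) := Finset.univ.filter fun i : Fin c =>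
      a i.succ < a i.castSucc / r with hS
  set d : ℕ → ℕ := fun k => (S.filter fun i => i.1 < k).card with hd
  have key : ∀ k, ∀ hk : k ≤ c,
      a ⟨k, by omega⟩ * r ^ (d k) ≤ a 0 ∧ (1 ≤ d k → a ⟨k, by omega⟩ * r ^ (d k) < a 0) := by
    intro k
    induction k with
    | zero =>
      intro _
      have hd0 : d 0 = 0 := by simp [hd]
      refine ⟨?_, fun h => by omega⟩
      rw [hd0, pow_zero, mul_one]
      exact le_of_eq rfl
    | succ k ih =>
      intro hk
      have hkc : k < c := by omega
      obtain ⟨ih1, ih2⟩ := ih (le_of_lt hkc)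
      have hsucc : (⟨k, hkc⟩ : Fin c).succ = ⟨k + 1, by omega⟩ := rfl
      have hcast : (⟨k, hkc⟩ : Fin c).castSucc = ⟨k, by omega⟩ := rfl
      have hrp : (0 : ℝ) < r ^ d k := by positivity
      by_cases hmem : (⟨k, hkc⟩ : Fin c) ∈ S
      · have hcard : d (k + 1) = d k + 1 := by
          have : (S.filter fun i => i.1 < k + 1)
              = insert ⟨k, hkc⟩ (S.filter fun i => i.1 < k) := by
            ext j
            simp only [Finset.mem_filter, Finset.mem_insert, Fin.ext_iff]
            constructor
            · rintro ⟨hjS, hjk⟩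
              rcases Nat.lt_succ_iff_lt_or_eq.mp hjk with h | h
              · exact Or.inr ⟨hjS, h⟩
              · exact Or.inl h
            · rintro (h | ⟨hjS, hjk⟩)
              · have : j = ⟨k, hkc⟩ := Fin.ext h
                subst this; exact ⟨hmem, Nat.lt_succ_self k⟩
              · exact ⟨hjS, Nat.lt_succ_of_lt hjk⟩
          rw [hd]
          simp only [this]
          rw [Finset.card_insert_of_notMem (by simp)]
        have hdropk : a (⟨k, hkc⟩ : Fin c).succ < a (⟨k, hkc⟩ : Fin c).castSucc / r := by
          have := hmem
          rw [hS, Finset.mem_filter] at this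
          exact this.2
        have hlt : a ⟨k + 1, by omega⟩ * r < a ⟨k, by omega⟩ := by
          rw [← hsucc, ← hcast]
          calc a (⟨k, hkc⟩ : Fin c).succ * r
              < (a (⟨k, hkc⟩ : Fin c).castSucc / r) * r := by
                exact mul_lt_mul_of_pos_right hdropk hr0
            _ = a (⟨k, hkc⟩ : Fin c).castSucc := div_mul_cancel₀ _ (ne_of_gt hr0)
        have main : a ⟨k + 1, by omega⟩ * r ^ (d (k + 1)) < a 0 := by
          rw [hcard, pow_succ]
          calc a ⟨k + 1, by omega⟩ * (r ^ d k * r)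
              = (a ⟨k + 1, by omega⟩ * r) * r ^ d k := by ring
            _ < a ⟨k, by omega⟩ * r ^ d k := mul_lt_mul_of_pos_right hlt hrp
            _ ≤ a 0 := ih1
        exact ⟨le_of_lt main, fun _ => main⟩
      · have hcard : d (k + 1) = d k := by
          have : (S.filter fun i => i.1 < k + 1) = (S.filter fun i => i.1 < k) := by
            ext j
            simp only [Finset.mem_filter]
            constructor
            · rintro ⟨hjS, hjk⟩
              rcases Nat.lt_succ_iff_lt_or_eq.mp hjk with h | h
              · exact ⟨hjS, h⟩
              · exact absurd hjS (by rwa [show j = ⟨k, hkc⟩ from Fin.ext h])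
            · rintro ⟨hjS, hjk⟩
              exact ⟨hjS, Nat.lt_succ_of_lt hjk⟩
          rw [hd]; simp only [this]
        have hle : a ⟨k + 1, by omega⟩ ≤ a ⟨k, by omega⟩ := by
          rw [← hsucc, ← hcast]; exact hmono _
        have step : a ⟨k + 1, by omega⟩ * r ^ (d (k + 1)) ≤ a ⟨k, by omega⟩ * r ^ (d k) := by
          rw [hcard]
          exact mul_le_mul_of_nonneg_right hle (le_of_lt hrp)
        exact ⟨le_trans step ih1, fun h => lt_of_le_of_lt step (ih2 (hcard ▸ h))⟩
  -- d c = S.card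
  have hdc : d c = S.card := by
    show (S.filter fun i => i.1 < c).card = S.card
    congr 1
    exact Finset.filter_true_of_mem fun i _ => i.2
  have hScard : (c : ℝ) / 2 ≤ (S.card : ℝ) := hdrop
  have hc2 : (2:ℝ) ≤ (c:ℝ) := by exact_mod_cast hc
  have hS1 : 1 ≤ S.card := by
    have h1 : (1:ℝ) ≤ (S.card : ℝ) := le_trans (by linarith) hScard
    exact_mod_cast h1
  obtain ⟨k1, k2⟩ := key c le_rfl
  have hlast : (⟨c, by omega⟩ : Fin (c + 1)) = Fin.last c := rfl
  have hfin : a (Fin.last c) * r ^ (S.card) < a 0 := by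
    rw [← hlast, ← hdc]
    exact k2 (by omega)
  -- n ≤ r ^ S.card
  have hexp : (1 : ℝ) ≤ (2 / (c : ℝ)) * (S.card : ℝ) := by
    rw [div_mul_eq_mul_div, le_div_iff₀ hc0]
    nlinarith
  have hpow : (n : ℝ) ≤ r ^ (S.card) := by
    rw [hr, ← Real.rpow_natCast ((n : ℝ) ^ ((2 : ℝ) / (c : ℝ))) S.card,
      ← Real.rpow_mul (by positivity)]
    calc (n : ℝ) = (n : ℝ) ^ (1 : ℝ) := (Real.rpow_one _).symm
      _ ≤ (n : ℝ) ^ ((2 / (c : ℝ)) * (S.card : ℝ)) :=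
        Real.rpow_le_rpow_of_exponent_le hn1 hexp
  have hac : 0 < a (Fin.last c) := by
    have := hpos ⟨c - 1, by omega⟩
    have heq : (⟨c - 1, by omega⟩ : Fin c).succ = Fin.last c := by
      apply Fin.ext
      simp [Fin.last]
      omega
    rwa [heq] at this
  have hn0 : (0 : ℝ) < (n : ℝ) := by positivity
  rw [lt_div_iff₀ hn0]
  calc a (Fin.last c) * n ≤ a (Fin.last c) * r ^ S.card :=
        mul_le_mul_of_nonneg_left hpow (le_of_lt hac)
    _ < a 0 := hfin
    _ ≤ 1 := ha0
end

section
/- Let k ≥ 1, let s : Fin k → ℕ with s i ≥ 1 for all i, and set n := 2·∑ i, s i. Consider the vertex type V := Σ i, (Fin (s i) ⊕ Fin (s i)) (component i is a complete bipartite graph with left part Fin (s i) and right part Fin (s i), with all edges directed left to right, unit node weights and unit edge weights) and c = 2 resources. If there exists T ⊆ Fin k with ∑_{i ∈ T} s i = ∑_{i ∉ T} s i, then the allocation r mapping all vertices of component i to resource 0 if i ∈ T and to resource 1 otherwise achieves streaming cost exactly n, i.e., max over components i and pairs (u,v) with u in the left part and v in the right part of component i of [n(r u) + n(r v) + (1 if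 r u ≠ r v else 0)] = n. -/
lemma filter_card_res (k : ℕ) (s : Fin k → ℕ) (T : Finset (Fin k))
    (r : (Σ i : Fin k, Fin (s i) ⊕ Fin (s i)) → Fin 2)
    (hr : ∀ v, r v = if v.1 ∈ T then 0 else 1) (b : Fin 2) :
    (Finset.univ.filter fun z : Σ i : Fin k, Fin (s i) ⊕ Fin (s i) =>
        r z = b).card = 2 * ∑ i ∈ (if b = 0 then T else Tᶜ), s i := by
  rw [Finset.card_filter]
  rw [← Finset.univ_sigma_univ, Finset.sum_sigma]
  simp only [hr]
  have : ∀ i : Fin k, ∑ _j : Fin (s i) ⊕ Fin (s i),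
      (if (if i ∈ T then (0:Fin 2) else 1) = b then 1 else 0) =
      if i ∈ (if b = 0 then T else Tᶜ) then 2 * s i else 0 := by
    intro i
    fin_cases b <;> by_cases h : i ∈ T <;>
      simp [h, Finset.card_univ, two_mul]
  simp only [this]
  rw [Finset.sum_ite_mem, Finset.univ_inter, Finset.mul_sum]

/-- Partition reduction, forward direction: for the parallel composition of complete
bipartite components `K_{s i, s i}` with unit weights, `c = 2` resources and
`n = 2·∑ i, s i` tasks, if `T` perfectly partitions the multiset `{s i}`, then the
allocation collocating component `i` on resource 0 iff `i ∈ T` achieves streaming cost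
exactly `n`: every left–right pair in a component costs at most `n`, and some pair costs
exactly `n`. -/
theorem partition_to_streaming_cost (k : ℕ) (hk : 1 ≤ k)
    (s : Fin k → ℕ) (hs : ∀ i, 1 ≤ s i) (n : ℕ) (hn : n = 2 * ∑ i, s i)
    (T : Finset (Fin k)) (hT : ∑ i ∈ T, s i = ∑ i ∈ Tᶜ, s i)
    (r : (Σ i : Fin k, Fin (s i) ⊕ Fin (s i)) → Fin 2)
    (hr : ∀ v, r v = if v.1 ∈ T then 0 else 1) :
    (∀ (i : Fin k) (u v : Fin (s i)),
        (Finset.univ.filter fun z : Σ i : Fin k, Fin (s i) ⊕ Fin (s i) =>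
            r z = r ⟨i, Sum.inl u⟩).card
          + (Finset.univ.filter fun z : Σ i : Fin k, Fin (s i) ⊕ Fin (s i) =>
              r z = r ⟨i, Sum.inr v⟩).card
          + (if r ⟨i, Sum.inl u⟩ ≠ r ⟨i, Sum.inr v⟩ then 1 else 0) ≤ n) ∧
      (∃ (i : Fin k) (u v : Fin (s i)),
        (Finset.univ.filter fun z : Σ i : Fin k, Fin (s i) ⊕ Fin (s i) =>
            r z = r ⟨i, Sum.inl u⟩).card
          + (Finset.univ.filter fun z : Σ i : Fin k, Fin (s i) ⊕ Fin (s i) =>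
              r z = r ⟨i, Sum.inr v⟩).card
          + (if r ⟨i, Sum.inl u⟩ ≠ r ⟨i, Sum.inr v⟩ then 1 else 0) = n) := by
  have hsum : ∑ i, s i = ∑ i ∈ T, s i + ∑ i ∈ Tᶜ, s i := by
    rw [← Finset.sum_add_sum_compl T s]
  have key : ∀ z₀, (Finset.univ.filter fun z : Σ i : Fin k, Fin (s i) ⊕ Fin (s i) =>
      r z = r z₀).card = ∑ i, s i := by
    intro z₀
    rw [filter_card_res k s T r hr]
    rw [hsum, ← hT]
    split <;> omega
  have heq : ∀ (i : Fin k) (u v : Fin (s i)),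
      (Finset.univ.filter fun z : Σ i : Fin k, Fin (s i) ⊕ Fin (s i) =>
          r z = r ⟨i, Sum.inl u⟩).card
        + (Finset.univ.filter fun z : Σ i : Fin k, Fin (s i) ⊕ Fin (s i) =>
            r z = r ⟨i, Sum.inr v⟩).card
        + (if r ⟨i, Sum.inl u⟩ ≠ r ⟨i, Sum.inr v⟩ then 1 else 0) = n := by
    intro i u v
    have hru : r ⟨i, Sum.inl u⟩ = r ⟨i, Sum.inr v⟩ := by rw [hr, hr]
    rw [key, key, hru, if_neg (by simp)]
    omega
  refine ⟨fun i u v => (heq i u v).le, ?_⟩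
  refine ⟨⟨0, hk⟩, ⟨0, hs _⟩, ⟨0, hs _⟩, heq _ _ _⟩
end

section
/- With the setup of the bipartite-components streaming model (components K_{s i, s i}, unit weights, c = 2, n = 2·∑ i, s i): if some allocation r : V → Fin 2 achieves streaming cost at most n, i.e., for all components i and all left–right pairs (u,v) in component i, n(r u) + n(r v) + (1 if r u ≠ r v else 0) ≤ n, then there exists T ⊆ Fin k with ∑_{i ∈ T} s i = ∑_{i ∉ T} s i. -/
/-!
A component whose two sides get different resources would load both resources, costing
`n(0) + n(1) + 1 = n + 1`; so every component is monochromatic. A monochromatic component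
then costs `2 n(R)` for its resource `R`, whence both loads are at most `n / 2`, hence exactly
`n / 2`, and the components on resource `0` form one half of a perfect partition.
-/

open Finset

section Fibers

variable {V : Type*} [Fintype V] (r : V → Fin 2)

theorem card_fiber_add_card_fiber_of_ne {a b : Fin 2} (hab : a ≠ b) :
    #{z | r z = a} + #{z | r z = b} = Fintype.card V := by
  have hb : ∀ x : Fin 2, x = b ↔ ¬x = a := by
    revert a b; decide
  simp_rw [hb]
  rw [card_filter_add_card_filter_not, card_univ]

theorem eq_of_card_fiber_add_card_fiber_add_ite_le {x y : V}
    (h : #{z | r z = r x} + #{z | r z = r y} + (if r x ≠ r y then 1 else 0)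
      ≤ Fintype.card V) :
    r x = r y := by
  by_contra hne
  rw [if_pos hne, card_fiber_add_card_fiber_of_ne r hne] at h
  omega

theorem two_mul_card_fiber_eq_card (h : ∀ x, 2 * #{z | r z = r x} ≤ Fintype.card V)
    (a : Fin 2) :
    2 * #{z | r z = a} = Fintype.card V := by
  have hle : ∀ b, 2 * #{z | r z = b} ≤ Fintype.card V := by
    intro b
    by_cases hb : ∃ x, r x = b
    · obtain ⟨x, rfl⟩ := hb
      exact h x
    · push Not at hb
      simp [filter_false_of_mem fun z _ => hb z]
  have hsum := card_fiber_add_card_fiber_of_ne r (a := a) (b := a.rev) (by revert a; decide)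
  have := hle a
  have := hle a.rev
  omega

end Fibers

theorem Sum.apply_eq_apply_of_apply_inl_eq_apply_inr {α γ : Type*} {f : α ⊕ α → γ}
    (h : ∀ a b, f (Sum.inl a) = f (Sum.inr b)) (x y : α ⊕ α) : f x = f y := by
  rcases x with a | a <;> rcases y with b | b
  exacts [(h a a).trans (h b a).symm, h a b, (h b a).symm, (h a a).symm.trans (h a b)]

section Sigma

variable {ι : Type*} [Fintype ι] {β : ι → Type*} [∀ i, Fintype (β i)]

theorem card_filter_sigma_of_iff (P : (Σ i, β i) → Prop) [DecidablePred P] (T : Finset ι)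
    (hP : ∀ i x, P ⟨i, x⟩ ↔ i ∈ T) :
    #{z | P z} = ∑ i ∈ T, Fintype.card (β i) := by
  have : ({z | P z} : Finset (Σ i, β i)) = T.sigma fun _ => univ := by
    ext ⟨i, x⟩
    simp [hP]
  rw [this, card_sigma]
  rfl

theorem exists_card_fiber_eq_sum_card [DecidableEq ι] (r : (Σ i, β i) → Fin 2)
    (hmono : ∀ i x y, r ⟨i, x⟩ = r ⟨i, y⟩) :
    ∃ T : Finset ι, #{z | r z = 0} = ∑ i ∈ T, Fintype.card (β i) ∧
      #{z | r z = 1} = ∑ i ∈ Tᶜ, Fintype.card (β i) := by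
  let T : Finset ι := {i | ∃ x, r ⟨i, x⟩ = 0}
  have hT0 (i : ι) (x : β i) : r ⟨i, x⟩ = 0 ↔ i ∈ T := by
    refine ⟨fun hx => mem_filter.mpr ⟨mem_univ i, x, hx⟩, fun hi => ?_⟩
    obtain ⟨y, hy⟩ := (mem_filter.mp hi).2
    rw [hmono i x y, hy]
  have hT1 (i : ι) (x : β i) : r ⟨i, x⟩ = 1 ↔ i ∈ Tᶜ := by
    rw [mem_compl, ← hT0 i x]
    exact ⟨fun hx => hx ▸ one_ne_zero, Fin.eq_one_of_ne_zero _⟩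
  exact ⟨T, card_filter_sigma_of_iff _ T hT0, card_filter_sigma_of_iff _ Tᶜ hT1⟩

end Sigma

theorem streaming_cost_to_partition_general (k : ℕ)
    (s : Fin k → ℕ) (n : ℕ) (hn : n = 2 * ∑ i, s i)
    (r : (Σ i : Fin k, Fin (s i) ⊕ Fin (s i)) → Fin 2)
    (hcost : ∀ (i : Fin k) (u v : Fin (s i)),
        (Finset.univ.filter fun z : Σ i : Fin k, Fin (s i) ⊕ Fin (s i) =>
            r z = r ⟨i, Sum.inl u⟩).card
          + (Finset.univ.filter fun z : Σ i : Fin k, Fin (s i) ⊕ Fin (s i) =>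
              r z = r ⟨i, Sum.inr v⟩).card
          + (if r ⟨i, Sum.inl u⟩ ≠ r ⟨i, Sum.inr v⟩ then 1 else 0) ≤ n) :
    ∃ T : Finset (Fin k), ∑ i ∈ T, s i = ∑ i ∈ Tᶜ, s i := by
  have hcard : Fintype.card (Σ i : Fin k, Fin (s i) ⊕ Fin (s i)) = n := by
    simp [hn, two_mul, sum_add_distrib]
  subst hcard
  have hmono (i : Fin k) (x y : Fin (s i) ⊕ Fin (s i)) : r ⟨i, x⟩ = r ⟨i, y⟩ :=
    Sum.apply_eq_apply_of_apply_inl_eq_apply_inr (f := fun x => r ⟨i, x⟩)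
      (fun u v => eq_of_card_fiber_add_card_fiber_add_ite_le r (hcost i u v)) x y
  have hload :
      ∀ z, 2 * #{w | r w = r z} ≤ Fintype.card (Σ i : Fin k, Fin (s i) ⊕ Fin (s i)) := by
    rintro ⟨i, x⟩
    have u : Fin (s i) := x.elim id id
    simpa [two_mul, hmono i x (.inl u), hmono i (.inr u) (.inl u)] using hcost i u u
  obtain ⟨T, h0, h1⟩ := exists_card_fiber_eq_sum_card r hmono
  have h := (two_mul_card_fiber_eq_card r hload 0).trans
    (two_mul_card_fiber_eq_card r hload 1).symm
  simp only [h0, h1, Fintype.card_sum, Fintype.card_fin, sum_add_distrib] at h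
  exact ⟨T, by omega⟩

/-- Partition reduction, converse direction: for the parallel composition of complete
bipartite components `K_{s i, s i}` with unit weights, `c = 2` resources and
`n = 2·∑ i, s i` tasks, if some allocation `r` achieves streaming cost at most `n`
(on every left–right pair of every component), then the multiset `{s i}` admits a
perfect partition. -/
theorem streaming_cost_to_partition (k : ℕ) (hk : 1 ≤ k)
    (s : Fin k → ℕ) (hs : ∀ i, 1 ≤ s i) (n : ℕ) (hn : n = 2 * ∑ i, s i)
    (r : (Σ i : Fin k, Fin (s i) ⊕ Fin (s i)) → Fin 2)
    (hcost : ∀ (i : Fin k) (u v : Fin (s i)),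
        (Finset.univ.filter fun z : Σ i : Fin k, Fin (s i) ⊕ Fin (s i) =>
            r z = r ⟨i, Sum.inl u⟩).card
          + (Finset.univ.filter fun z : Σ i : Fin k, Fin (s i) ⊕ Fin (s i) =>
              r z = r ⟨i, Sum.inr v⟩).card
          + (if r ⟨i, Sum.inl u⟩ ≠ r ⟨i, Sum.inr v⟩ then 1 else 0) ≤ n) :
    ∃ T : Finset (Fin k), ∑ i ∈ T, s i = ∑ i ∈ Tᶜ, s i :=
  streaming_cost_to_partition_general k s n hn r hcost
end

section
/- With the setup of the bipartite-components streaming model (components K_{s i, s i}, unit weights, c = 2, n = 2·∑ i, s i): for every allocation r : V → Fin 2, the streaming cost is at least n; that is, there exist a component i and a left–right pair (u,v) in component i with n(r u) + n(r v) + (1 if r u ≠ r v else 0) ≥ n. -/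
/-- Streaming cost lower bound for the bipartite-components instance: for the parallel
composition of complete bipartite components `K_{s i, s i}` with unit weights, `c = 2`
resources and `n = 2·∑ i, s i` tasks, every allocation `r` has streaming cost at least
`n`, i.e., some left–right pair of some component costs at least `n`. -/
theorem streaming_cost_lower_bound (k : ℕ) (hk : 1 ≤ k)
    (s : Fin k → ℕ) (hs : ∀ i, 1 ≤ s i) (n : ℕ) (hn : n = 2 * ∑ i, s i)
    (r : (Σ i : Fin k, Fin (s i) ⊕ Fin (s i)) → Fin 2) :
    ∃ (i : Fin k) (u v : Fin (s i)),
      n ≤ (Finset.univ.filter fun z : Σ i : Fin k, Fin (s i) ⊕ Fin (s i) =>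
            r z = r ⟨i, Sum.inl u⟩).card
          + (Finset.univ.filter fun z : Σ i : Fin k, Fin (s i) ⊕ Fin (s i) =>
              r z = r ⟨i, Sum.inr v⟩).card
          + (if r ⟨i, Sum.inl u⟩ ≠ r ⟨i, Sum.inr v⟩ then 1 else 0) := by
  have hcard : Fintype.card (Σ i : Fin k, Fin (s i) ⊕ Fin (s i)) = n := by
    simp [Fintype.card_sigma, hn, two_mul, Finset.sum_add_distrib]
  have h2 : ∀ x a b : Fin 2, a ≠ b → (x = b ↔ ¬ x = a) := by decide
  have hsplit : ∀ a b : Fin 2, a ≠ b →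
      (Finset.univ.filter fun z : Σ i : Fin k, Fin (s i) ⊕ Fin (s i) => r z = a).card
      + (Finset.univ.filter fun z : Σ i : Fin k, Fin (s i) ⊕ Fin (s i) => r z = b).card = n := by
    intro a b hab
    have hfb : (Finset.univ.filter fun z : Σ i : Fin k, Fin (s i) ⊕ Fin (s i) => r z = b)
        = Finset.univ.filter fun z : Σ i : Fin k, Fin (s i) ⊕ Fin (s i) => ¬ r z = a := by
      apply Finset.filter_congr
      intro z _
      simpa using h2 (r z) a b hab
    rw [hfb, Finset.card_filter_add_card_filter_not, Finset.card_univ, hcard]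
  by_cases hmono : ∀ (i : Fin k) (u v : Fin (s i)), r ⟨i, Sum.inl u⟩ = r ⟨i, Sum.inr v⟩
  · -- every component is monochromatic; take the majority resource
    have hsum := hsplit 0 1 (by decide)
    have hpos : 1 ≤ ∑ i, s i := by
      calc 1 ≤ s ⟨0, hk⟩ := hs _
        _ ≤ ∑ i, s i := Finset.single_le_sum (fun i _ => Nat.zero_le _) (Finset.mem_univ _)
    obtain ⟨R, hR⟩ : ∃ R : Fin 2,
        ∑ i, s i ≤ (Finset.univ.filter fun z : Σ i : Fin k, Fin (s i) ⊕ Fin (s i) => r z = R).card := by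
      by_contra hcon
      push_neg at hcon
      have h0 := hcon 0
      have h1 := hcon 1
      omega
    have hne : (Finset.univ.filter fun z : Σ i : Fin k, Fin (s i) ⊕ Fin (s i) => r z = R).Nonempty := by
      rw [← Finset.card_pos]; omega
    obtain ⟨z, hz⟩ := hne
    simp only [Finset.mem_filter] at hz
    obtain ⟨i, w⟩ := z
    have hu : Fin (s i) := ⟨0, hs i⟩
    -- all vertices of component i have resource R
    have hLR : r ⟨i, Sum.inl hu⟩ = R ∧ r ⟨i, Sum.inr hu⟩ = R := by
      cases w with
      | inl u0 =>
        have e1 : r ⟨i, Sum.inr hu⟩ = R := (hmono i u0 hu).symm.trans hz.2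
        exact ⟨(hmono i hu hu).trans e1, e1⟩
      | inr v0 =>
        have e1 : r ⟨i, Sum.inl hu⟩ = (r ⟨i, Sum.inr v0⟩ : Fin 2) := hmono i hu v0
        have e2 : r ⟨i, Sum.inl hu⟩ = R := e1.trans hz.2
        exact ⟨e2, (hmono i hu hu).symm.trans e2⟩
    refine ⟨i, hu, hu, ?_⟩
    rw [hLR.1, hLR.2, if_neg (by simp)]
    omega
  · -- some pair is bichromatic: the two filters partition all of V
    push_neg at hmono
    obtain ⟨i, u, v, huv⟩ := hmono
    refine ⟨i, u, v, ?_⟩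
    rw [if_pos huv, hsplit _ _ huv]
    omega
end

section
/- Define SPD trees inductively: a leaf carries a positive weight w > 0; an internal node is a serial or parallel composition of a nonempty finite list of SPD trees. Define W(T) recursively by W(leaf w) = w, W(serial [T₁,…,T_k]) = (∑ i, Real.sqrt (W(T_i)))², W(parallel [T₁,…,T_k]) = ∑ i, W(T_i). Given positive shares x assigned to the leaves of T, define Cost(T, x) recursively by Cost(leaf w, x) = w / x(that leaf), Cost(serial [T₁,…,T_k], x) = ∑ i, Cost(T_i, x), Cost(parallel [T₁,…,T_k], x) = max_i Cost(T_i, x). Then for every c > 0 and every assignment x of positive shares to the leaves of T with (sum of all leaf shares) ≤ c, it holds that Cost(T, x) ≥ W(T) / c. -/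
/-- SPD trees with leaf data `α`: a leaf, or a serial/parallel composition of a list of
SPD trees. -/
inductive SPD (α : Type) : Type
  | leaf : α → SPD α
  | ser : List (SPD α) → SPD α
  | par : List (SPD α) → SPD α

namespace SPD

/-- Map over leaf data. -/
def map {α β : Type} (f : α → β) : SPD α → SPD β
  | leaf a => leaf (f a)
  | ser l => ser (l.attach.map fun t => map f t.1)
  | par l => par (l.attach.map fun t => map f t.1)
termination_by t => sizeOf t
decreasing_by
  all_goals have := List.sizeOf_lt_of_mem t.2; simp [SPD.ser.sizeOf_spec, SPD.par.sizeOf_spec] at *; omega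

/-- The weight `W(T)` computed by `computeWeights`: the weight of a leaf, the squared
sum of square roots at serial nodes, and the sum at parallel nodes. -/
noncomputable def W : SPD ℝ → ℝ
  | leaf w => w
  | ser l => (l.attach.map fun t => Real.sqrt (W t.1)).sum ^ 2
  | par l => (l.attach.map fun t => W t.1).sum
termination_by t => sizeOf t
decreasing_by
  all_goals have := List.sizeOf_lt_of_mem t.2; simp at *; omega

/-- The continuous streaming cost of a tree whose leaves carry (weight, share) pairs:
`w / x` at a leaf, the sum at serial nodes, the maximum at parallel nodes. -/
noncomputable def Cost : SPD (ℝ × ℝ) → ℝ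
  | leaf p => p.1 / p.2
  | ser l => (l.attach.map fun t => Cost t.1).sum
  | par l => (l.attach.map fun t => Cost t.1).foldr max 0
termination_by t => sizeOf t
decreasing_by
  all_goals have := List.sizeOf_lt_of_mem t.2; simp at *; omega

/-- The total share assigned to the leaves. -/
def shareSum : SPD (ℝ × ℝ) → ℝ
  | leaf p => p.2
  | ser l => (l.attach.map fun t => shareSum t.1).sum
  | par l => (l.attach.map fun t => shareSum t.1).sum
termination_by t => sizeOf t
decreasing_by
  all_goals have := List.sizeOf_lt_of_mem t.2; simp at *; omega

/-- Validity: leaf weights and shares are positive, and composition lists are nonempty. -/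
inductive Valid : SPD (ℝ × ℝ) → Prop
  | leaf {p : ℝ × ℝ} : 0 < p.1 → 0 < p.2 → Valid (SPD.leaf p)
  | ser {l} : l ≠ [] → (∀ t ∈ l, Valid t) → Valid (SPD.ser l)
  | par {l} : l ≠ [] → (∀ t ∈ l, Valid t) → Valid (SPD.par l)

end SPD

/-! Every subtree `T` of a valid tree satisfies `W(T) ≤ Cost(T) · shareSum(T)`. At a serial node
this is the Cauchy–Schwarz inequality `(∑ √Wᵢ)² ≤ (∑ Costᵢ)(∑ sᵢ)` fed with `Wᵢ ≤ Costᵢ sᵢ`; at a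
parallel node each `Wᵢ ≤ Costᵢ sᵢ ≤ (maxⱼ Costⱼ) sᵢ`, and summing gives the claim. -/

theorem List.sum_sq_le_sum_mul_sum_of_sq_le_mul {ι R : Type*} [CommSemiring R] [LinearOrder R]
    [IsStrictOrderedRing R] [ExistsAddOfLE R] (l : List ι) {r f g : ι → R}
    (hf : ∀ i ∈ l, 0 ≤ f i) (hg : ∀ i ∈ l, 0 ≤ g i) (ht : ∀ i ∈ l, r i ^ 2 ≤ f i * g i) :
    (l.map r).sum ^ 2 ≤ (l.map f).sum * (l.map g).sum := by
  simp only [← Fin.sum_univ_fun_getElem]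
  exact Finset.sum_sq_le_sum_mul_sum_of_sq_le_mul _ (fun i _ ↦ hf _ (l.getElem_mem _))
    (fun i _ ↦ hg _ (l.getElem_mem _)) (fun i _ ↦ ht _ (l.getElem_mem _))

namespace SPD

@[simp] lemma map_ser {α β : Type} (f : α → β) (l : List (SPD α)) :
    map f (ser l) = ser (l.map (map f)) := by rw [map]; simp
@[simp] lemma map_par {α β : Type} (f : α → β) (l : List (SPD α)) :
    map f (par l) = par (l.map (map f)) := by rw [map]; simp
@[simp] lemma W_ser (l : List (SPD ℝ)) :
    W (ser l) = (l.map fun t ↦ √(W t)).sum ^ 2 := by rw [W]; simp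
@[simp] lemma W_par (l : List (SPD ℝ)) : W (par l) = (l.map W).sum := by rw [W]; simp
@[simp] lemma Cost_ser (l : List (SPD (ℝ × ℝ))) : Cost (ser l) = (l.map Cost).sum := by
  rw [Cost]; simp
@[simp] lemma Cost_par (l : List (SPD (ℝ × ℝ))) :
    Cost (par l) = (l.map Cost).foldr max 0 := by rw [Cost]; simp
@[simp] lemma shareSum_ser (l : List (SPD (ℝ × ℝ))) :
    shareSum (ser l) = (l.map shareSum).sum := by rw [shareSum]; simp
@[simp] lemma shareSum_par (l : List (SPD (ℝ × ℝ))) :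
    shareSum (par l) = (l.map shareSum).sum := by rw [shareSum]; simp

namespace Valid

variable {A : SPD (ℝ × ℝ)}

lemma shareSum_pos (hA : Valid A) : 0 < shareSum A := by
  induction hA with
  | leaf _ hx => simpa [shareSum] using hx
  | ser hne _ ih | par hne _ ih =>
    simpa using List.sum_pos _ (by simpa using ih) (by simpa using hne)

lemma W_nonneg (hA : Valid A) : 0 ≤ W (map Prod.fst A) := by
  induction hA with
  | leaf hw _ => simpa [map, W] using hw.le
  | ser => simp only [map_ser, W_ser]; positivity
  | par _ _ ih => simpa using List.sum_nonneg (by simpa using ih)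

lemma W_le_cost_mul_shareSum (hA : Valid A) : W (map Prod.fst A) ≤ Cost A * shareSum A := by
  induction hA with
  | leaf _ hx => simp [map, W, Cost, shareSum, hx.ne']
  | @ser l _ hl ih =>
    have hcost : ∀ t ∈ l, 0 ≤ Cost t := fun t ht ↦ nonneg_of_mul_nonneg_left
      ((hl t ht).W_nonneg.trans (ih t ht)) (hl t ht).shareSum_pos
    simp only [map_ser, W_ser, Cost_ser, shareSum_ser, List.map_map]
    refine l.sum_sq_le_sum_mul_sum_of_sq_le_mul hcost (fun t ht ↦ (hl t ht).shareSum_pos.le)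
      fun t ht ↦ ?_
    simpa [Real.sq_sqrt (hl t ht).W_nonneg] using ih t ht
  | @par l _ hl ih =>
    simp only [map_par, W_par, Cost_par, shareSum_par, List.map_map, ← List.sum_map_mul_left]
    refine List.sum_le_sum fun t ht ↦ (ih t ht).trans ?_
    exact mul_le_mul_of_nonneg_right (List.le_max_of_le' 0 (List.mem_map_of_mem ht) le_rfl)
      (hl t ht).shareSum_pos.le

end Valid

end SPD

theorem cost_ge_W_div_c_general (A : SPD (ℝ × ℝ)) (hA : SPD.Valid A)
    (c : ℝ) (hsum : SPD.shareSum A ≤ c) :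
    SPD.W (SPD.map Prod.fst A) / c ≤ SPD.Cost A :=
  calc SPD.W (SPD.map Prod.fst A) / c ≤ SPD.W (SPD.map Prod.fst A) / SPD.shareSum A :=
        div_le_div_of_nonneg_left hA.W_nonneg hA.shareSum_pos hsum
    _ ≤ SPD.Cost A := (div_le_iff₀ hA.shareSum_pos).2 hA.W_le_cost_mul_shareSum

/-- Optimality of `𝒜^cont`, lower-bound part: for every SPD tree `A` with positive leaf
weights and positive leaf shares (nonempty compositions) whose shares sum to at most
`c > 0`, the continuous streaming cost is at least `W(T)/c`, where `T` is the underlying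
weight tree. -/
theorem cost_ge_W_div_c (A : SPD (ℝ × ℝ)) (hA : SPD.Valid A)
    (c : ℝ) (hc : 0 < c) (hsum : SPD.shareSum A ≤ c) :
    SPD.W (SPD.map Prod.fst A) / c ≤ SPD.Cost A :=
  cost_ge_W_div_c_general A hA c hsum
end
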